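/- arXiv:1306.5353 — 3 statements merged into one kernel-verified Lean document; each statement's English description precedes it below -/
import Mathlib

section
/- Let N ≥ 1 be an integer, t₀ > 0, ρ ∈ (0,1) and K ≥ 2 real numbers, and let G, M : (0,∞) → M_N(ℂ) be two families of matrices such that (G_t + M_t)(G_s + M_s) = G_{t+s} + M_{t+s} for all s, t > 0, and ‖M_u‖ ≤ K ρ^u for all u > 0. Set Γ := max( 2ρ^{t₀}, sup_{w ∈ [t₀, 2t₀)} ‖G_w‖ ) and assume Γ < ∞. Then for every integer n ≥ 1 and every v ∈ [0, t₀): ‖G_{n t₀ + v}‖ ≤ (1 + (1+K)(n−1)) · Γ · (Γ + K ρ^{t₀})^{n−1}. -/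
/-!
Write `A u := G u + M u`, a semigroup on `(0, ∞)`. Since `n t₀ + v = (t₀ + v) + (n - 1) t₀`,
`A (n t₀ + v) = A (t₀ + v) * A t₀ ^ (n - 1)`, and both factors have norm at most
`B := Γ + K ρ^t₀` because their times lie in `[t₀, 2 t₀)`. Hence `‖G (n t₀ + v)‖ ≤ B ^ n + K ρ^(n t₀)`,
and for `n ≥ 2` the bound `2 ρ^t₀ ≤ Γ` absorbs both `B` and the `M`-term into `(1 + K) Γ B ^ (n - 1)`.
For `n = 1` the claim is the definition of `Γ`.
-/

noncomputable section

/-- The `L∞`-operator norm on `N × N` complex matrices: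
`‖A‖ = max_k ∑ ℓ |A k ℓ|`. -/
def mnorm {N : ℕ} (A : Matrix (Fin N) (Fin N) ℂ) : ℝ :=
  ⨆ k : Fin N, ∑ ℓ : Fin N, ‖A k ℓ‖

attribute [local instance] Matrix.linftyOpNormedRing

theorem mnorm_eq_norm {N : ℕ} (A : Matrix (Fin N) (Fin N) ℂ) : mnorm A = ‖A‖ := by
  rw [mnorm, Matrix.linfty_opNorm_def, Finset.sup_univ_eq_ciSup, NNReal.coe_iSup]
  push_cast
  rfl

theorem norm_mul_pow_le_mul_pow {R : Type*} [NormedRing R] (a b : R) (m : ℕ) :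
    ‖a * b ^ m‖ ≤ ‖a‖ * ‖b‖ ^ m := by
  induction m with
  | zero => simp
  | succ m ih =>
    calc ‖a * b ^ (m + 1)‖ = ‖a * b ^ m * b‖ := by rw [pow_succ, mul_assoc]
      _ ≤ ‖a * b ^ m‖ * ‖b‖ := norm_mul_le _ _
      _ ≤ ‖a‖ * ‖b‖ ^ m * ‖b‖ := by gcongr
      _ = ‖a‖ * ‖b‖ ^ (m + 1) := by ring

theorem mul_pow_eq_of_semigroup {R : Type*} [Monoid R] {A : ℝ → R}
    (hA : ∀ s t : ℝ, 0 < s → 0 < t → A t * A s = A (t + s))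
    {s t : ℝ} (hs : 0 < s) (ht : 0 < t) (m : ℕ) : A s * A t ^ m = A (s + m * t) := by
  induction m with
  | zero => simp
  | succ m ih =>
    calc A s * A t ^ (m + 1) = A s * A t ^ m * A t := by rw [pow_succ, mul_assoc]
      _ = A (s + m * t + t) := by rw [ih, hA t _ ht (by positivity)]
      _ = A (s + (m + 1 : ℕ) * t) := by push_cast; ring_nf

theorem rpow_le_pow_rpow_of_le {ρ t u : ℝ} (hρ0 : 0 ≤ ρ) (hρ1 : ρ ≤ 1) (ht : 0 ≤ t) (n : ℕ)
    (hu : n * t ≤ u) : ρ ^ u ≤ (ρ ^ t) ^ n := by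
  rw [← Real.rpow_mul_natCast hρ0, mul_comm]
  exact Real.rpow_le_rpow_of_exponent_ge' hρ0 hρ1 (by positivity) hu

theorem add_pow_succ_add_mul_pow_succ_le {Γ K p : ℝ} (hK : 0 ≤ K) (hp : 0 ≤ p) (hpΓ : 2 * p ≤ Γ)
    {m : ℕ} (hm : 1 ≤ m) :
    (Γ + K * p) ^ (m + 1) + K * p ^ (m + 1) ≤ (1 + (1 + K) * m) * Γ * (Γ + K * p) ^ m := by
  have hΓ : 0 ≤ Γ := by linarith
  have hpow : p ^ m ≤ (Γ + K * p) ^ m := by gcongr; nlinarith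
  have hcoef : 1 + K ≤ 1 + (1 + K) * m := by
    have : (1 : ℝ) ≤ m := by exact_mod_cast hm
    nlinarith
  calc (Γ + K * p) ^ (m + 1) + K * p ^ (m + 1)
      = (Γ + K * p) * (Γ + K * p) ^ m + K * p * p ^ m := by ring
    _ ≤ (Γ + K * p) * (Γ + K * p) ^ m + K * p * (Γ + K * p) ^ m := by gcongr
    _ = (Γ + 2 * K * p) * (Γ + K * p) ^ m := by ring
    _ ≤ (1 + K) * Γ * (Γ + K * p) ^ m := by gcongr; nlinarith
    _ ≤ (1 + (1 + K) * m) * Γ * (Γ + K * p) ^ m := by gcongr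

section PerturbedSemigroup

variable {R : Type*} [NormedRing R] {G M : ℝ → R} {t₀ ρ K Γ : ℝ}

theorem nonneg_of_norm_le_mul_rpow (hρ0 : 0 < ρ) (hM : ∀ u : ℝ, 0 < u → ‖M u‖ ≤ K * ρ ^ u) :
    0 ≤ K :=
  nonneg_of_mul_nonneg_left ((norm_nonneg _).trans (hM 1 one_pos)) (Real.rpow_pos_of_pos hρ0 1)

theorem norm_add_le_of_mem_Ico (hρ0 : 0 < ρ) (hρ1 : ρ ≤ 1) (ht₀ : 0 < t₀)
    (hM : ∀ u : ℝ, 0 < u → ‖M u‖ ≤ K * ρ ^ u)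
    (hG : ∀ w ∈ Set.Ico t₀ (2 * t₀), ‖G w‖ ≤ Γ) {w : ℝ} (hw : w ∈ Set.Ico t₀ (2 * t₀)) :
    ‖G w + M w‖ ≤ Γ + K * ρ ^ t₀ := by
  have hK := nonneg_of_norm_le_mul_rpow hρ0 hM
  calc ‖G w + M w‖ ≤ ‖G w‖ + ‖M w‖ := norm_add_le _ _
    _ ≤ Γ + K * ρ ^ w := add_le_add (hG w hw) (hM w (ht₀.trans_le hw.1))
    _ ≤ Γ + K * ρ ^ t₀ := by
      gcongr Γ + K * ?_
      exact Real.rpow_le_rpow_of_exponent_ge hρ0 hρ1 hw.1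

theorem norm_le_of_perturbed_semigroup (hρ0 : 0 < ρ) (hρ1 : ρ ≤ 1) (ht₀ : 0 < t₀)
    (hSG : ∀ s t : ℝ, 0 < s → 0 < t → (G t + M t) * (G s + M s) = G (t + s) + M (t + s))
    (hM : ∀ u : ℝ, 0 < u → ‖M u‖ ≤ K * ρ ^ u)
    (hG : ∀ w ∈ Set.Ico t₀ (2 * t₀), ‖G w‖ ≤ Γ) (hΓ : 2 * ρ ^ t₀ ≤ Γ)
    (m : ℕ) {v : ℝ} (hv0 : 0 ≤ v) (hvt : v < t₀) :
    ‖G ((m + 1) * t₀ + v)‖ ≤ (1 + (1 + K) * m) * Γ * (Γ + K * ρ ^ t₀) ^ m := by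
  have hvI : t₀ + v ∈ Set.Ico t₀ (2 * t₀) := ⟨by linarith, by linarith⟩
  rcases Nat.eq_zero_or_pos m with rfl | hm
  · simpa using hG _ hvI
  set x := (m + 1) * t₀ + v
  set A := fun u => G u + M u
  have hK := nonneg_of_norm_le_mul_rpow hρ0 hM
  have hA : ‖A x‖ ≤ (Γ + K * ρ ^ t₀) ^ (m + 1) := by
    have hx : A x = A (t₀ + v) * A t₀ ^ m := by
      rw [mul_pow_eq_of_semigroup hSG (by linarith) ht₀]
      congr 1
      ring
    have hA₀ := norm_add_le_of_mem_Ico hρ0 hρ1 ht₀ hM hG ⟨le_rfl, by linarith⟩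
    have hAv := norm_add_le_of_mem_Ico hρ0 hρ1 ht₀ hM hG hvI
    rw [hx, pow_succ']
    calc ‖A (t₀ + v) * A t₀ ^ m‖ ≤ ‖A (t₀ + v)‖ * ‖A t₀‖ ^ m := norm_mul_pow_le_mul_pow _ _ m
      _ ≤ (Γ + K * ρ ^ t₀) * (Γ + K * ρ ^ t₀) ^ m := by
        gcongr
        exact (norm_nonneg _).trans hA₀
  have hMx : ‖M x‖ ≤ K * (ρ ^ t₀) ^ (m + 1) :=
    (hM x (by positivity)).trans (by
      gcongr
      exact rpow_le_pow_rpow_of_le hρ0.le hρ1 ht₀.le _ (by push_cast; linarith))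
  calc ‖G x‖ = ‖A x - M x‖ := by simp [A]
    _ ≤ ‖A x‖ + ‖M x‖ := norm_sub_le _ _
    _ ≤ (Γ + K * ρ ^ t₀) ^ (m + 1) + K * (ρ ^ t₀) ^ (m + 1) := add_le_add hA hMx
    _ ≤ _ := add_pow_succ_add_mul_pow_succ_le hK (by positivity) hΓ hm

end PerturbedSemigroup

theorem stmt11_general (N : ℕ) (t₀ ρ K : ℝ)
    (ht₀ : 0 < t₀) (hρ0 : 0 < ρ) (hρ1 : ρ < 1)
    (G M : ℝ → Matrix (Fin N) (Fin N) ℂ)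
    (hSG : ∀ s t : ℝ, 0 < s → 0 < t →
      (G t + M t) * (G s + M s) = G (t + s) + M (t + s))
    (hM : ∀ u : ℝ, 0 < u → mnorm (M u) ≤ K * ρ ^ u)
    (hbdd : BddAbove ((fun w => mnorm (G w)) '' Set.Ico t₀ (2 * t₀))) :
    ∀ n : ℕ, 1 ≤ n → ∀ v : ℝ, 0 ≤ v → v < t₀ →
      mnorm (G (n * t₀ + v)) ≤
        (1 + (1 + K) * ((n : ℝ) - 1)) *
          (max (2 * ρ ^ t₀) (sSup ((fun w => mnorm (G w)) '' Set.Ico t₀ (2 * t₀)))) *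
          (max (2 * ρ ^ t₀) (sSup ((fun w => mnorm (G w)) '' Set.Ico t₀ (2 * t₀)))
            + K * ρ ^ t₀) ^ (n - 1) := by
  intro n hn v hv0 hvt
  obtain ⟨m, rfl⟩ := Nat.exists_eq_add_of_le' hn
  simp only [mnorm_eq_norm] at hM hbdd ⊢
  have hG : ∀ w ∈ Set.Ico t₀ (2 * t₀),
      ‖G w‖ ≤ max (2 * ρ ^ t₀) (sSup ((fun w => ‖G w‖) '' Set.Ico t₀ (2 * t₀))) :=
    fun w hw => (le_csSup hbdd ⟨w, hw, rfl⟩).trans (le_max_right _ _)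
  simpa using norm_le_of_perturbed_semigroup hρ0 hρ1.le ht₀ hSG hM hG (le_max_left _ _) m hv0 hvt

theorem stmt11 (N : ℕ) (hN : 1 ≤ N) (t₀ ρ K : ℝ)
    (ht₀ : 0 < t₀) (hρ0 : 0 < ρ) (hρ1 : ρ < 1) (hK : 2 ≤ K)
    (G M : ℝ → Matrix (Fin N) (Fin N) ℂ)
    (hSG : ∀ s t : ℝ, 0 < s → 0 < t →
      (G t + M t) * (G s + M s) = G (t + s) + M (t + s))
    (hM : ∀ u : ℝ, 0 < u → mnorm (M u) ≤ K * ρ ^ u)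
    (hbdd : BddAbove ((fun w => mnorm (G w)) '' Set.Ico t₀ (2 * t₀))) :
    ∀ n : ℕ, 1 ≤ n → ∀ v : ℝ, 0 ≤ v → v < t₀ →
      mnorm (G (n * t₀ + v)) ≤
        (1 + (1 + K) * ((n : ℝ) - 1)) *
          (max (2 * ρ ^ t₀) (sSup ((fun w => mnorm (G w)) '' Set.Ico t₀ (2 * t₀)))) *
          (max (2 * ρ ^ t₀) (sSup ((fun w => mnorm (G w)) '' Set.Ico t₀ (2 * t₀)))
            + K * ρ ^ t₀) ^ (n - 1) :=
  stmt11_general N t₀ ρ K ht₀ hρ0 hρ1 G M hSG hM hbdd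
end
end

section
/- Fix k ∈ Fin N and q > 0, and let (𝒴_{k,ℓ,q})_{ℓ ∈ Fin N} be bounded positive measures on E with Lebesgue decomposition 𝒴_{k,ℓ,q} = g_{k,ℓ,q}·Leb + μ_{k,ℓ,q}, where each g_{k,ℓ,q} : E → [0,∞) is measurable and each μ_{k,ℓ,q} is singular with respect to Lebesgue measure. Assume the absolutely continuous part is nonzero: ∫_E Σ_ℓ g_{k,ℓ,q}(y) dy > 0. Then there exist no a ∈ E, function θ : Fin N → E, and closed additive subgroup F of E with F ≠ E, such that for every ℓ ∈ Fin N the measure 𝒴_{k,ℓ,q} gives zero mass to the complement of the coset θ(k) − θ(ℓ) + a + F; that is, the lattice relation 𝒴_{k,ℓ,q}( E ∖ { θ(k) − θ(ℓ) + a + f : f ∈ F } ) = 0 for all ℓ is impossible. -/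
open MeasureTheory

noncomputable section

abbrev E (d : ℕ) : Type := EuclideanSpace ℝ (Fin d)

/-! A closed subgroup `F ≠ E` is Lebesgue-null: otherwise, by Steinhaus, `F - F = F` would be a
neighbourhood of `0`, making `F` clopen, hence all of the connected space `E`. So every coset of `F`
is null, and the absolutely continuous part of `𝒴_{k,ℓ,q}`, which is dominated by `𝒴_{k,ℓ,q}` and
hence carried by such a coset, vanishes. Then each density `g_{k,ℓ,q}` is zero a.e., contradicting
`∫ Σ_ℓ g_{k,ℓ,q} > 0`. -/

section HaarSubgroup

variable {G : Type*} [AddGroup G] [TopologicalSpace G] [IsTopologicalAddGroup G]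
  [LocallyCompactSpace G] [MeasurableSpace G] [BorelSpace G]
  (μ : Measure G) [μ.IsAddHaarMeasure] [μ.InnerRegular]

theorem AddSubgroup.isOpen_of_addHaar_pos (H : AddSubgroup G)
    (hH : MeasurableSet (H : Set G)) (hpos : 0 < μ H) : IsOpen (H : Set G) := by
  refine H.isOpen_of_mem_nhds (Filter.mem_of_superset
    (Measure.sub_mem_nhds_zero_of_addHaar_pos μ _ hH hpos) ?_)
  rintro _ ⟨x, hx, y, hy, rfl⟩
  exact H.sub_mem hx hy

theorem AddSubgroup.addHaar_eq_zero_of_isClosed_of_ne_univ [PreconnectedSpace G]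
    (H : AddSubgroup G) (hcl : IsClosed (H : Set G)) (hne : (H : Set G) ≠ Set.univ) :
    μ H = 0 := by
  by_contra h
  have hopen := H.isOpen_of_addHaar_pos μ hcl.measurableSet (pos_iff_ne_zero.mpr h)
  exact hne (IsClopen.eq_univ ⟨hcl, hopen⟩ ⟨0, H.zero_mem⟩)

end HaarSubgroup

namespace MeasureTheory

theorem Measure.eq_zero_of_le_of_absolutelyContinuous {α : Type*} [MeasurableSpace α]
    {ν ρ μ : Measure α} {s : Set α} (hle : ν ≤ ρ) (hac : ν ≪ μ)
    (hρ : ρ sᶜ = 0) (hμ : μ s = 0) : ν = 0 := by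
  rw [← Measure.measure_univ_eq_zero, ← Set.union_compl_self s]
  exact measure_union_null (hac hμ) (le_antisymm ((hle _).trans hρ.le) bot_le)

theorem ae_eq_zero_of_withDensity_ofReal_eq_zero {α : Type*} [MeasurableSpace α]
    {μ : Measure α} {f : α → ℝ} (hfm : AEMeasurable f μ) (hf : 0 ≤ f)
    (h : μ.withDensity (fun x => ENNReal.ofReal (f x)) = 0) : f =ᵐ[μ] 0 := by
  filter_upwards [(withDensity_eq_zero_iff hfm.ennreal_ofReal).mp h] with x hx
  exact le_antisymm (ENNReal.ofReal_eq_zero.mp hx) (hf x)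

end MeasureTheory

theorem stmt13_general (N d : ℕ) (k : Fin N) (Y : Fin N → Measure (E d))
    (g : Fin N → E d → ℝ) (μs : Fin N → Measure (E d))
    (hgmeas : ∀ ℓ, Measurable (g ℓ)) (hgpos : ∀ ℓ y, 0 ≤ g ℓ y)
    (hdec : ∀ ℓ, Y ℓ = volume.withDensity (fun y => ENNReal.ofReal (g ℓ y)) + μs ℓ)
    (hac : 0 < ∫ y, (∑ ℓ, g ℓ y) ∂(volume : Measure (E d))) :
    ¬ ∃ (a : E d) (θ : Fin N → E d) (F : AddSubgroup (E d)),
        IsClosed (F : Set (E d)) ∧ (F : Set (E d)) ≠ Set.univ ∧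
        ∀ ℓ : Fin N,
          Y ℓ ((fun f : E d => θ k - θ ℓ + a + f) '' (F : Set (E d)))ᶜ = 0 := by
  rintro ⟨a, θ, F, hFcl, hFne, hY⟩
  have hcoset : ∀ ℓ, volume ((fun f : E d => θ k - θ ℓ + a + f) '' (F : Set (E d))) = 0 := by
    intro ℓ
    rw [Set.image_add_left, measure_preimage_add]
    exact F.addHaar_eq_zero_of_isClosed_of_ne_univ volume hFcl hFne
  have hg : ∀ ℓ, g ℓ =ᵐ[volume] 0 := fun ℓ =>
    ae_eq_zero_of_withDensity_ofReal_eq_zero (hgmeas ℓ).aemeasurable (hgpos ℓ)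
      (Measure.eq_zero_of_le_of_absolutelyContinuous (hdec ℓ ▸ Measure.le_add_right le_rfl)
        (withDensity_absolutelyContinuous _ _) (hY ℓ) (hcoset ℓ))
  have hint : ∫ y, (∑ ℓ, g ℓ y) ∂(volume : Measure (E d)) = 0 :=
    integral_eq_zero_of_ae (by filter_upwards [ae_all_iff.2 hg] with y hy; simp [hy])
  exact hac.ne' hint

theorem stmt13 (N d : ℕ) (hN : 1 ≤ N) (hd : 1 ≤ d)
    (k : Fin N) (q : ℝ) (hq : 0 < q)
    (Y : Fin N → Measure (E d)) (hYfin : ∀ ℓ, IsFiniteMeasure (Y ℓ))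
    (g : Fin N → E d → ℝ) (μs : Fin N → Measure (E d))
    (hgmeas : ∀ ℓ, Measurable (g ℓ)) (hgpos : ∀ ℓ y, 0 ≤ g ℓ y)
    (hsing : ∀ ℓ, (μs ℓ) ⟂ₘ (volume : Measure (E d)))
    (hdec : ∀ ℓ, Y ℓ = volume.withDensity (fun y => ENNReal.ofReal (g ℓ y)) + μs ℓ)
    (hac : 0 < ∫ y, (∑ ℓ, g ℓ y) ∂(volume : Measure (E d))) :
    ¬ ∃ (a : E d) (θ : Fin N → E d) (F : AddSubgroup (E d)),
        IsClosed (F : Set (E d)) ∧ (F : Set (E d)) ≠ Set.univ ∧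
        ∀ ℓ : Fin N,
          Y ℓ ((fun f : E d => θ k - θ ℓ + a + f) '' (F : Set (E d)))ᶜ = 0 :=
  stmt13_general N d k Y g μs hgmeas hgpos hdec hac
end
end

section
/- Let d ≥ 1 be an integer and δ > 0, C > 0, r ∈ (0,1) real numbers. For each real t ≥ 2 let φ_t : ℝᵈ → ℂ be measurable, and suppose there exist functions λ, L_t, R_t defined on the closed ball {ζ : ‖ζ‖ ≤ δ} with values in ℂ such that for all ζ with ‖ζ‖ < δ: φ_t(ζ) = λ(ζ)^{⌊t⌋}·L_t(ζ) + R_t(ζ), |L_t(ζ) − 1| ≤ C‖ζ‖ and |R_t(ζ)| ≤ C r^{⌊t⌋}, and such that for all ζ ∈ ℝᵈ with t^{-1/2}‖ζ‖ < δ: |λ(t^{-1/2}ζ)^{⌊t⌋} − exp(−‖ζ‖²/2)| ≤ C t^{-1/2}(1 + ‖ζ‖³) exp(−‖ζ‖²/8). Then there exists a constant C' > 0 (depending only on d, δ, C, r) such that for all t ≥ 2: ∫_{‖ζ‖ < δ√t} | φ_t(t^{-1/2}ζ) − exp(−‖ζ‖²/2) | dζ ≤ C'·( t^{-1/2} + t^{d/2}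 r^{⌊t⌋} ). -/
/-!
On the ball `‖ζ‖ < δ √t` the point `t^{-1/2} ζ` lies in the region where the expansion of `φ_t`
holds. Writing `λ^n L + R - g = (λ^n - g) L + g (L - 1) + R` with `g` the Gaussian, the first two
terms are at most a multiple of `t^{-1/2} (1 + ‖ζ‖³) e^{-‖ζ‖²/8}`, which is integrable over all of
`ℝᵈ`, and the remainder is at most `C rⁿ`, whose integral over the ball is `O(t^{d/2} rⁿ)`.
-/

open MeasureTheory

noncomputable section

open Metric

lemma one_add_pow_three_mul_exp_le (x : ℝ) :
    (1 + x ^ 3) * Real.exp (-x ^ 2 / 8) ≤ 514 * Real.exp (-(1 / 16) * x ^ 2) := by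
  -- `e^{x²/16} ≥ (1 + x²/32)²` is a quartic, which dominates the cubic.
  have hsq : (1 + x ^ 2 / 32) ^ 2 ≤ Real.exp (x ^ 2 / 16) := by
    have h := Real.add_one_le_exp (x ^ 2 / 32)
    rw [show x ^ 2 / 16 = x ^ 2 / 32 + x ^ 2 / 32 by ring, Real.exp_add]
    nlinarith [Real.exp_pos (x ^ 2 / 32), sq_nonneg x]
  have hpoly : 1 + x ^ 3 ≤ 514 * Real.exp (x ^ 2 / 16) := by
    nlinarith [sq_nonneg (x ^ 2 - 2 * x), sq_nonneg (x - 1), sq_nonneg x,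
      sq_nonneg (x ^ 2 - x), sq_nonneg (x + 1)]
  calc (1 + x ^ 3) * Real.exp (-x ^ 2 / 8)
      ≤ 514 * Real.exp (x ^ 2 / 16) * Real.exp (-x ^ 2 / 8) := by gcongr
    _ = 514 * Real.exp (-(1 / 16) * x ^ 2) := by rw [mul_assoc, ← Real.exp_add]; ring_nf

lemma exp_neg_sq_div_two_mul_le {x : ℝ} (hx : 0 ≤ x) :
    Real.exp (-x ^ 2 / 2) * x ≤ (1 + x ^ 3) * Real.exp (-x ^ 2 / 8) := by
  rw [mul_comm]
  gcongr ?_ * ?_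
  · nlinarith [sq_nonneg (x - 1), sq_nonneg x]
  · exact Real.exp_le_exp.2 (by nlinarith [sq_nonneg x])

lemma integrable_one_add_norm_pow_three_mul_exp {V : Type*} [NormedAddCommGroup V]
    [InnerProductSpace ℝ V] [FiniteDimensional ℝ V] [MeasurableSpace V] [BorelSpace V] :
    Integrable (fun v : V => (1 + ‖v‖ ^ 3) * Real.exp (-‖v‖ ^ 2 / 8)) := by
  have hgauss : Integrable (fun v : V => Real.exp (-(1 / 16) * ‖v‖ ^ 2)) := by
    refine (GaussianFourier.integrable_cexp_neg_mul_sq_norm_add (V := V) (b := 1 / 16)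
      (by norm_num) 0 0).norm.congr (.of_forall fun v => ?_)
    simp [Complex.norm_exp, ← Complex.ofReal_pow]
  refine (hgauss.const_mul 514).mono' (by fun_prop) (.of_forall fun v => ?_)
  rw [Real.norm_of_nonneg (by positivity)]
  exact one_add_pow_three_mul_exp_le ‖v‖

lemma norm_mul_add_sub_le {𝕜 : Type*} [NormedRing 𝕜] [NormOneClass 𝕜] (a l ρ g : 𝕜) :
    ‖a * l + ρ - g‖ ≤ ‖a - g‖ * (1 + ‖l - 1‖) + ‖g‖ * ‖l - 1‖ + ‖ρ‖ := by
  have hl : ‖l‖ ≤ 1 + ‖l - 1‖ := by simpa [add_comm] using norm_add_le (l - 1) 1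
  calc ‖a * l + ρ - g‖ = ‖(a - g) * l + g * (l - 1) + ρ‖ := by congr 1; noncomm_ring
    _ ≤ ‖a - g‖ * ‖l‖ + ‖g‖ * ‖l - 1‖ + ‖ρ‖ := by
      grw [norm_add₃_le, norm_mul_le, norm_mul_le]
    _ ≤ _ := by gcongr

lemma norm_comp_smul_sub_gaussian_le {V : Type*} [NormedAddCommGroup V] [NormedSpace ℝ V]
    {f lam L R : V → ℂ} {n : ℕ} {δ C ε s : ℝ} (hC : 0 ≤ C) (hs : 0 ≤ s)
    (hdec : ∀ ζ : V, ‖ζ‖ < δ → f ζ = lam ζ ^ n * L ζ + R ζ)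
    (hL : ∀ ζ : V, ‖ζ‖ < δ → ‖L ζ - 1‖ ≤ C * ‖ζ‖)
    (hR : ∀ ζ : V, ‖ζ‖ < δ → ‖R ζ‖ ≤ ε)
    (hlam : ∀ ζ : V, s * ‖ζ‖ < δ →
      ‖lam (s • ζ) ^ n - Complex.exp (-(‖ζ‖ : ℂ) ^ 2 / 2)‖
        ≤ C * s * (1 + ‖ζ‖ ^ 3) * Real.exp (-‖ζ‖ ^ 2 / 8))
    {ζ : V} (hζ : s * ‖ζ‖ < δ) :
    ‖f (s • ζ) - Complex.exp (-(‖ζ‖ : ℂ) ^ 2 / 2)‖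
      ≤ C * (2 + C * δ) * s * ((1 + ‖ζ‖ ^ 3) * Real.exp (-‖ζ‖ ^ 2 / 8)) + ε := by
  have hnorm : ‖s • ζ‖ = s * ‖ζ‖ := by rw [norm_smul, Real.norm_of_nonneg hs]
  have hmem : ‖s • ζ‖ < δ := hnorm ▸ hζ
  have hgauss : ‖Complex.exp (-(‖ζ‖ : ℂ) ^ 2 / 2)‖ = Real.exp (-‖ζ‖ ^ 2 / 2) := by
    rw [← Complex.ofReal_pow, ← Complex.ofReal_neg, ← Complex.ofReal_ofNat,
      ← Complex.ofReal_div, Complex.norm_exp_ofReal]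
  have hL' := hL _ hmem
  rw [hnorm] at hL'
  have hLδ : ‖L (s • ζ) - 1‖ ≤ C * δ := hL'.trans (by gcongr)
  have hG := exp_neg_sq_div_two_mul_le (norm_nonneg ζ)
  have hlam' := hlam ζ hζ
  have hR' := hR _ hmem
  rw [hdec _ hmem]
  calc _ ≤ _ := norm_mul_add_sub_le _ _ _ _
    _ ≤ C * s * (1 + ‖ζ‖ ^ 3) * Real.exp (-‖ζ‖ ^ 2 / 8) * (1 + C * δ)
        + Real.exp (-‖ζ‖ ^ 2 / 2) * (C * (s * ‖ζ‖)) + ε := by rw [hgauss]; gcongr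
    _ = C * s * ((1 + ‖ζ‖ ^ 3) * Real.exp (-‖ζ‖ ^ 2 / 8) * (1 + C * δ)
        + Real.exp (-‖ζ‖ ^ 2 / 2) * ‖ζ‖) + ε := by ring
    _ ≤ C * s * ((1 + ‖ζ‖ ^ 3) * Real.exp (-‖ζ‖ ^ 2 / 8) * (1 + C * δ)
        + (1 + ‖ζ‖ ^ 3) * Real.exp (-‖ζ‖ ^ 2 / 8)) + ε := by gcongr
    _ = _ := by ring

lemma setIntegral_le_mul_integral_add_mul_measureReal {α : Type*} [MeasurableSpace α]
    {μ : Measure α} {s : Set α} {f G : α → ℝ} {A c : ℝ} (hs : MeasurableSet s)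
    (hμs : μ s ≠ ⊤) (hG : Integrable G μ) (hG0 : 0 ≤ G) (hf0 : 0 ≤ f) (hA : 0 ≤ A)
    (hf : ∀ x ∈ s, f x ≤ A * G x + c) :
    ∫ x in s, f x ∂μ ≤ A * ∫ x, G x ∂μ + c * μ.real s := by
  have hbound : IntegrableOn (fun x => A * G x + c) s μ :=
    (hG.const_mul A).integrableOn.add (integrableOn_const hμs)
  calc ∫ x in s, f x ∂μ ≤ ∫ x in s, (A * G x + c) ∂μ :=
        integral_mono_of_nonneg (.of_forall hf0) hbound ((ae_restrict_iff' hs).2 (.of_forall hf))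
    _ = A * ∫ x in s, G x ∂μ + c * μ.real s := by
        rw [integral_add (hG.const_mul A).integrableOn (integrableOn_const hμs),
          integral_const_mul, setIntegral_const, smul_eq_mul, mul_comm (μ.real s)]
    _ ≤ A * ∫ x, G x ∂μ + c * μ.real s := by
        grw [setIntegral_le_integral hG (.of_forall hG0)]

lemma rpow_neg_one_div_two_mul_sqrt {t : ℝ} (ht : 0 < t) : t ^ (-(1 : ℝ) / 2) * √t = 1 := by
  rw [Real.rpow_div_two_eq_sqrt _ ht.le, Real.rpow_neg_one, inv_mul_cancel₀]
  positivity

lemma measureReal_ball_mul_sqrt {V : Type*} [NormedAddCommGroup V] [NormedSpace ℝ V]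
    [FiniteDimensional ℝ V] [MeasurableSpace V] [BorelSpace V] (μ : Measure V)
    [μ.IsAddHaarMeasure] (x : V) {δ t : ℝ} (hδ : 0 < δ) (ht : 0 < t) :
    μ.real (ball x (δ * √t))
      = δ ^ Module.finrank ℝ V * μ.real (ball 0 1) * t ^ ((Module.finrank ℝ V : ℝ) / 2) := by
  rw [Measure.real, Measure.addHaar_ball_of_pos μ x (by positivity), ENNReal.toReal_mul,
    ENNReal.toReal_ofReal (by positivity), Real.rpow_div_two_eq_sqrt _ ht.le,
    Real.rpow_natCast, mul_pow, Measure.real]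
  ring

theorem stmt14_general (d : ℕ) (δ C r : ℝ)
    (hδ : 0 < δ) (hC : 0 < C) (hr0 : 0 < r)
    (φ : ℝ → E d → ℂ)
    (lam : E d → ℂ) (L R : ℝ → E d → ℂ)
    (hdec : ∀ t : ℝ, 2 ≤ t → ∀ ζ : E d, ‖ζ‖ < δ →
      φ t ζ = lam ζ ^ ⌊t⌋₊ * L t ζ + R t ζ)
    (hL : ∀ t : ℝ, 2 ≤ t → ∀ ζ : E d, ‖ζ‖ < δ → ‖L t ζ - 1‖ ≤ C * ‖ζ‖)
    (hR : ∀ t : ℝ, 2 ≤ t → ∀ ζ : E d, ‖ζ‖ < δ → ‖R t ζ‖ ≤ C * r ^ ⌊t⌋₊)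
    (hlam : ∀ t : ℝ, 2 ≤ t → ∀ ζ : E d, t ^ (-(1 : ℝ) / 2) * ‖ζ‖ < δ →
      ‖lam ((t ^ (-(1 : ℝ) / 2) : ℝ) • ζ) ^ ⌊t⌋₊
          - Complex.exp (-(‖ζ‖ : ℂ) ^ 2 / 2)‖
        ≤ C * t ^ (-(1 : ℝ) / 2) * (1 + ‖ζ‖ ^ 3) * Real.exp (-‖ζ‖ ^ 2 / 8)) :
    ∃ C' > (0 : ℝ), ∀ t : ℝ, 2 ≤ t →
      (∫ ζ in Metric.ball (0 : E d) (δ * Real.sqrt t),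
          ‖φ t ((t ^ (-(1 : ℝ) / 2) : ℝ) • ζ)
            - Complex.exp (-(‖ζ‖ : ℂ) ^ 2 / 2)‖ ∂(volume : Measure (E d)))
        ≤ C' * (t ^ (-(1 : ℝ) / 2) + t ^ ((d : ℝ) / 2) * r ^ ⌊t⌋₊) := by
  set K := ∫ ζ : E d, (1 + ‖ζ‖ ^ 3) * Real.exp (-‖ζ‖ ^ 2 / 8)
  set V₁ := volume.real (ball (0 : E d) 1)
  have hK : 0 ≤ K := integral_nonneg fun ζ => by positivity
  refine ⟨C * (2 + C * δ) * K + C * δ ^ d * V₁ + 1, by positivity, fun t ht => ?_⟩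
  have ht0 : 0 < t := by linarith
  set s := t ^ (-(1 : ℝ) / 2)
  have hs : 0 < s := Real.rpow_pos_of_pos ht0 _
  have hbound : ∀ ζ ∈ ball (0 : E d) (δ * √t), ‖φ t (s • ζ) - Complex.exp (-(‖ζ‖ : ℂ) ^ 2 / 2)‖
      ≤ C * (2 + C * δ) * s * ((1 + ‖ζ‖ ^ 3) * Real.exp (-‖ζ‖ ^ 2 / 8)) + C * r ^ ⌊t⌋₊ := by
    intro ζ hζ
    refine norm_comp_smul_sub_gaussian_le hC.le hs.le (hdec t ht) (hL t ht) (hR t ht)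
      (hlam t ht) ?_
    rw [mem_ball_zero_iff] at hζ
    calc s * ‖ζ‖ < s * (δ * √t) := by gcongr
      _ = δ := by rw [mul_left_comm, rpow_neg_one_div_two_mul_sqrt ht0, mul_one]
  have hint := setIntegral_le_mul_integral_add_mul_measureReal isOpen_ball.measurableSet
    measure_ball_lt_top.ne integrable_one_add_norm_pow_three_mul_exp (fun _ => by positivity)
    (fun _ => norm_nonneg _) (by positivity) hbound
  rw [measureReal_ball_mul_sqrt volume 0 hδ ht0, finrank_euclideanSpace_fin] at hint
  have hy : 0 ≤ t ^ ((d : ℝ) / 2) * r ^ ⌊t⌋₊ := by positivity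
  refine hint.trans ?_
  nlinarith [mul_nonneg hK hs.le, mul_nonneg (by positivity : 0 ≤ C * (2 + C * δ) * K) hy,
    mul_nonneg (by positivity : 0 ≤ C * δ ^ d * V₁) hs.le]

theorem stmt14 (d : ℕ) (hd : 1 ≤ d) (δ C r : ℝ)
    (hδ : 0 < δ) (hC : 0 < C) (hr0 : 0 < r) (hr1 : r < 1)
    (φ : ℝ → E d → ℂ) (hφ : ∀ t : ℝ, 2 ≤ t → Measurable (φ t))
    (lam : E d → ℂ) (L R : ℝ → E d → ℂ)
    (hdec : ∀ t : ℝ, 2 ≤ t → ∀ ζ : E d, ‖ζ‖ < δ →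
      φ t ζ = lam ζ ^ ⌊t⌋₊ * L t ζ + R t ζ)
    (hL : ∀ t : ℝ, 2 ≤ t → ∀ ζ : E d, ‖ζ‖ < δ → ‖L t ζ - 1‖ ≤ C * ‖ζ‖)
    (hR : ∀ t : ℝ, 2 ≤ t → ∀ ζ : E d, ‖ζ‖ < δ → ‖R t ζ‖ ≤ C * r ^ ⌊t⌋₊)
    (hlam : ∀ t : ℝ, 2 ≤ t → ∀ ζ : E d, t ^ (-(1 : ℝ) / 2) * ‖ζ‖ < δ →
      ‖lam ((t ^ (-(1 : ℝ) / 2) : ℝ) • ζ) ^ ⌊t⌋₊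
          - Complex.exp (-(‖ζ‖ : ℂ) ^ 2 / 2)‖
        ≤ C * t ^ (-(1 : ℝ) / 2) * (1 + ‖ζ‖ ^ 3) * Real.exp (-‖ζ‖ ^ 2 / 8)) :
    ∃ C' > (0 : ℝ), ∀ t : ℝ, 2 ≤ t →
      (∫ ζ in Metric.ball (0 : E d) (δ * Real.sqrt t),
          ‖φ t ((t ^ (-(1 : ℝ) / 2) : ℝ) • ζ)
            - Complex.exp (-(‖ζ‖ : ℂ) ^ 2 / 2)‖ ∂(volume : Measure (E d)))
        ≤ C' * (t ^ (-(1 : ℝ) / 2) + t ^ ((d : ℝ) / 2) * r ^ ⌊t⌋₊) :=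
  stmt14_general d δ C r hδ hC hr0 φ lam L R hdec hL hR hlam
end
end
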